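/- arXiv:2410.18331 — 6 statements merged into one kernel-verified Lean document; each statement's English description precedes it below -/
import Mathlib

section
/- Let g_1,...,g_n be vectors in K^{n-d-1} (K = ℝ or ℂ, n ≥ d+2) such that the g_i linearly span K^{n-d-1} and ∑_{i=1}^n g_i = 0. Then there exists a sequence a_1,...,a_n of affinely spanning points in K^d whose Gale transform is g_1,...,g_n. -/
/-! Conjugating the `g j` coordinatewise gives the rows `b i` of a matrix `B`; they are linearly
independent because the `g j` span, and the all-ones vector lies in `ker B` because `∑ g j = 0`.
Extend the all-ones vector to a basis of the `(d+1)`-dimensional space `ker B` and read the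
points `a j` off the other `d` basis vectors. The matrix `A` of the `(a j, 1)` then has linearly
independent rows, so it is surjective and the `a j` affinely span; and `B Aᵀ = 0` gives
`A Bᵀ = 0`, so the `n - d - 1` independent vectors `b i` lie in, hence span, the
`(n - d - 1)`-dimensional space `ker A`. -/

/-- The `(d+1) × n` matrix whose `j`-th column is `(a j, 1)`. -/
noncomputable def galeMatrix {K : Type*} [RCLike K] {d n : ℕ}
    (a : Fin n → Fin d → K) : Matrix (Fin (d + 1)) (Fin n) K :=
  fun i j => if h : (i : ℕ) < d then a j ⟨i, h⟩ else 1

/-- `g` is a Gale transform of `a`: there is a basis `b` of `ker A` such that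
`(g j) i = conj ((b i) j)`. -/
def IsGaleTransform {K : Type*} [RCLike K] {d n : ℕ}
    (a : Fin n → Fin d → K) (g : Fin n → Fin (n - d - 1) → K) : Prop :=
  ∃ b : Fin (n - d - 1) → (Fin n → K),
    (∀ i, (galeMatrix a).mulVecLin (b i) = 0) ∧
    LinearIndependent K b ∧
    Submodule.span K (Set.range b) = LinearMap.ker (galeMatrix a).mulVecLin ∧
    (∀ j i, g j i = starRingEnd K (b i j))

open Matrix Module Submodule LinearMap

section Duality

theorem Matrix.mulVec_row_eq_zero_of_mulVec_row_eq_zero {R m κ ι : Type*} [CommSemiring R]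
    [Fintype ι] {A : Matrix m ι R} {B : Matrix κ ι R} (h : ∀ k, B *ᵥ A k = 0) (i : κ) :
    A *ᵥ B i = 0 :=
  funext fun k => by rw [mulVec, dotProduct_comm]; exact congrFun (h k) i

variable {K : Type*} [Field K] {m κ ι : Type*} [Fintype m] [Fintype ι]

theorem Matrix.finrank_ker_mulVecLin_add_card {A : Matrix m ι K}
    (hA : LinearIndependent K A.row) :
    finrank K (ker A.mulVecLin) + Fintype.card m = Fintype.card ι := by
  have h := A.mulVecLin.finrank_range_add_finrank_ker
  rw [finrank_fintype_fun_eq_card, ← Matrix.rank, hA.rank_matrix] at h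
  omega

theorem Matrix.mulVecLin_surjective_of_linearIndependent_row {A : Matrix m ι K}
    (hA : LinearIndependent K A.row) :
    Function.Surjective A.mulVecLin := by
  rw [← range_eq_top]
  apply eq_top_of_finrank_eq
  rw [← Matrix.rank, hA.rank_matrix, finrank_fintype_fun_eq_card]

theorem Matrix.span_row_eq_ker_mulVecLin [Fintype κ] {A : Matrix m ι K} {B : Matrix κ ι K}
    (hA : LinearIndependent K A.row) (hB : LinearIndependent K B.row)
    (hBA : ∀ k, B *ᵥ A k = 0) (hcard : Fintype.card m + Fintype.card κ = Fintype.card ι) :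
    span K (Set.range B.row) = ker A.mulVecLin := by
  apply eq_of_le_of_finrank_eq
  · rw [span_le]
    rintro _ ⟨i, rfl⟩
    exact mulVec_row_eq_zero_of_mulVec_row_eq_zero hBA i
  · have := finrank_ker_mulVecLin_add_card hA
    rw [finrank_span_eq_card hB]
    omega

end Duality

theorem Matrix.linearIndependent_row_conjTranspose_of_span_row_eq_top {K ι κ : Type*} [RCLike K]
    [Fintype ι] [Fintype κ] {G : Matrix ι κ K} (hG : span K (Set.range G.row) = ⊤) :
    LinearIndependent K Gᴴ.row := by
  open scoped ComplexOrder in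
  rw [linearIndependent_iff_card_eq_finrank_span, Set.finrank, ← rank_eq_finrank_span_row,
    rank_conjTranspose, rank_eq_finrank_span_row, hG, finrank_top, finrank_fintype_fun_eq_card]

theorem exists_linearIndependent_snoc {F M : Type*} [DivisionRing F] [AddCommGroup M]
    [Module F M] [FiniteDimensional F M] {d : ℕ} (h : finrank F M = d + 1) {x : M}
    (hx : x ≠ 0) :
    ∃ v : Fin d → M, LinearIndependent F (Fin.snoc v x : Fin (d + 1) → M) := by
  obtain ⟨C, hC⟩ := Submodule.exists_isCompl (F ∙ x)
  have hCd : finrank F C = d := by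
    have := finrank_add_eq_of_isCompl hC
    rw [finrank_span_singleton hx, h] at this
    omega
  let c := finBasisOfFinrankEq F C hCd
  refine ⟨C.subtype ∘ c,
    linearIndependent_finSnoc.2 ⟨c.linearIndependent.map' _ C.ker_subtype, ?_⟩⟩
  rw [Set.range_comp, ← Submodule.map_span, c.span_eq, map_subtype_top]
  intro hxC
  exact hx (disjoint_def.1 hC.disjoint x (mem_span_singleton_self x) hxC)

section Gale

variable {K : Type*} [RCLike K] {d n : ℕ}

theorem galeMatrix_eq_snoc (a : Fin n → Fin d → K) :
    galeMatrix a = Matrix.of (Fin.snoc (fun i j => a j i) 1 : Fin (d + 1) → Fin n → K) := by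
  ext i j
  induction i using Fin.lastCases <;> simp [galeMatrix]

theorem galeMatrix_mulVec (a : Fin n → Fin d → K) (x : Fin n → K) :
    galeMatrix a *ᵥ x = (Fin.snoc (∑ j, x j • a j) (∑ j, x j) : Fin (d + 1) → K) := by
  ext i
  induction i using Fin.lastCases <;>
    simp [galeMatrix_eq_snoc, mulVec, dotProduct, Finset.sum_apply, mul_comm]

theorem affineSpan_eq_top_of_galeMatrix_surjective {a : Fin n → Fin d → K}
    (ha : Function.Surjective (galeMatrix a).mulVecLin) : affineSpan K (Set.range a) = ⊤ := by
  refine eq_top_iff.2 fun v _ => ?_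
  obtain ⟨x, hx⟩ := ha (Fin.snoc v 1)
  rw [mulVecLin_apply, galeMatrix_mulVec] at hx
  have hsum : ∑ j, x j = 1 := by simpa using congrFun hx (Fin.last d)
  have hv : ∑ j, x j • a j = v := by
    ext i; simpa using congrFun hx i.castSucc
  rw [← hv, ← Finset.univ.affineCombination_eq_linear_combination a x hsum]
  exact affineCombination_mem_affineSpan hsum a

end Gale

/-- any spanning sequence summing to zero is a Gale transform of some
affinely spanning sequence. -/
theorem stmt2 {K : Type*} [RCLike K] (d n : ℕ) (hn : d + 2 ≤ n)
    (g : Fin n → Fin (n - d - 1) → K)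
    (hspan : Submodule.span K (Set.range g) = ⊤)
    (hsum : ∑ i, g i = 0) :
    ∃ a : Fin n → Fin d → K,
      affineSpan K (Set.range a) = ⊤ ∧ IsGaleTransform a g := by
  set B : Matrix (Fin (n - d - 1)) (Fin n) K := (Matrix.of g)ᴴ
  have hB : LinearIndependent K B.row :=
    linearIndependent_row_conjTranspose_of_span_row_eq_top hspan
  have hones : (1 : Fin n → K) ∈ ker B.mulVecLin := by
    ext i
    simpa [B, mulVec, dotProduct, Finset.sum_apply] using congrArg (star <| · i) hsum
  have hker : finrank K (ker B.mulVecLin) = d + 1 := by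
    have := finrank_ker_mulVecLin_add_card hB
    simp only [Fintype.card_fin] at this
    omega
  have : NeZero n := ⟨by omega⟩
  obtain ⟨v, hv⟩ := exists_linearIndependent_snoc hker
    (x := ⟨1, hones⟩) (Subtype.coe_ne_coe.1 one_ne_zero)
  set a : Fin n → Fin d → K := fun j i => (v i : Fin n → K) j
  have hA : (galeMatrix a).row = (ker B.mulVecLin).subtype ∘ Fin.snoc v ⟨1, hones⟩ := by
    rw [Fin.comp_snoc]
    exact galeMatrix_eq_snoc a
  have hArow : LinearIndependent K (galeMatrix a).row := by
    rw [hA]; exact hv.map' _ (ker_subtype _)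
  have hBA (k : Fin (d + 1)) : B *ᵥ galeMatrix a k = 0 := by
    change B.mulVecLin ((galeMatrix a).row k) = 0
    rw [hA]
    exact (Fin.snoc (α := fun _ => ker B.mulVecLin) v ⟨1, hones⟩ k).2
  refine ⟨a, affineSpan_eq_top_of_galeMatrix_surjective
      (mulVecLin_surjective_of_linearIndependent_row hArow),
    B, mulVec_row_eq_zero_of_mulVec_row_eq_zero hBA, hB,
    span_row_eq_ker_mulVecLin hArow hB hBA (by simp only [Fintype.card_fin]; omega),
    fun j i => by simp [B]⟩
end

section
/- Let r ≥ 3 be an odd prime and let m = 2a(r^{ℓ_1} + ... + r^{ℓ_k}) where ℓ_1 < ... < ℓ_k are nonnegative integers and 1 ≤ a ≤ r-1 is odd. Then every digit in the base-r expansion of m(r-1)/2 is even. -/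
/-- If all base-`r` digits of `N` and of `c` are even and `N < r^L`, then all
base-`r` digits of `N + c * r^L` are even. -/
lemma evd_add (r : ℕ) (hr : 2 ≤ r) {N c L : ℕ} (hN : N < r ^ L)
    (h1 : ∀ j, Even (N / r ^ j % r)) (h2 : ∀ j, Even (c / r ^ j % r)) :
    ∀ j, Even ((N + c * r ^ L) / r ^ j % r) := by
  intro j
  rcases lt_or_ge j L with h | h
  · have hpow : r ^ L = r ^ (L - j) * r ^ j := by rw [← pow_add]; congr 1; omega
    rw [hpow, ← mul_assoc, Nat.add_mul_div_right _ _ (pow_pos (by omega) j)]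
    obtain ⟨d, hd⟩ : r ∣ c * r ^ (L - j) :=
      Dvd.dvd.mul_left (dvd_pow_self r (by omega)) c
    rw [hd, mul_comm r d, Nat.add_mul_mod_self_right]
    exact h1 j
  · have hpow : r ^ j = r ^ L * r ^ (j - L) := by rw [← pow_add]; congr 1; omega
    rw [hpow, ← Nat.div_div_eq_div_mul, Nat.add_mul_div_right _ _ (pow_pos (by omega) L),
      Nat.div_eq_of_lt hN, zero_add]
    exact h2 (j - L)

lemma evd_single (r : ℕ) (hr : 2 ≤ r) {c : ℕ} (hc : c < r) (hce : Even c) :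
    ∀ j, Even (c / r ^ j % r) := by
  intro j
  cases j with
  | zero => simpa [Nat.mod_eq_of_lt hc] using hce
  | succ n =>
    have : c / r ^ (n + 1) = 0 :=
      Nat.div_eq_of_lt (lt_of_lt_of_le hc (Nat.le_self_pow (by omega) r))
    simp [this]

lemma evd_two (r : ℕ) (hr : 2 ≤ r) {x y e : ℕ} (hx : x < r) (hy : y < r)
    (hxy : x + y < r) (hxe : Even x) (hye : Even y) :
    ∀ j, Even ((x + y * r ^ e) / r ^ j % r) := by
  cases e with
  | zero => simpa using evd_single r hr hxy (hxe.add hye)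
  | succ n =>
    exact evd_add r hr (lt_of_lt_of_le hx (Nat.le_self_pow (by omega) r))
      (evd_single r hr hx hxe) (evd_single r hr hy hye)

lemma kid (r a : ℕ) (ha1 : 1 ≤ a) (har : a ≤ r) :
    a * (r - 1) = (r - a) + (a - 1) * r := by
  obtain ⟨b, rfl⟩ := Nat.exists_eq_add_of_le har
  obtain ⟨c, rfl⟩ := Nat.exists_eq_add_of_le ha1
  have h1 : 1 + c + b - 1 = c + b := by omega
  have h2 : 1 + c + b - (1 + c) = b := by omega
  have h3 : 1 + c - 1 = c := by omega
  rw [h1, h2, h3]; ring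

lemma inv_lemma (r : ℕ) (hr2 : 2 ≤ r) (hodd : Odd r)
    (a : ℕ) (ha1 : 1 ≤ a) (ha2 : a ≤ r - 1) (haodd : Odd a) :
    ∀ k (ℓ : Fin (k + 1) → ℕ), StrictMono ℓ →
      ∃ M, (∀ j, Even (M / r ^ j % r)) ∧ M < r ^ (ℓ (Fin.last k) + 1) ∧
        a * (r - 1) * ∑ i, r ^ (ℓ i) = M + (a - 1) * r ^ (ℓ (Fin.last k) + 1) := by
  have hra : a ≤ r := by omega
  have hev_ra : Even (r - a) := by
    rw [Nat.even_iff]; rw [Nat.odd_iff] at hodd haodd; omega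
  have hev_a1 : Even (a - 1) := by
    rw [Nat.even_iff]; rw [Nat.odd_iff] at haodd; omega
  intro k
  induction k with
  | zero =>
    intro ℓ hℓ
    refine ⟨(r - a) * r ^ (ℓ 0), ?_, ?_, ?_⟩
    · have := evd_add r hr2 (N := 0) (c := r - a) (L := ℓ 0)
        (pow_pos (by omega) _) (by intro j; simp)
        (evd_single r hr2 (by omega) hev_ra)
      simpa using this
    · have h1 : r - a < r := by omega
      calc (r - a) * r ^ (ℓ 0) < r * r ^ (ℓ 0) :=
            Nat.mul_lt_mul_of_pos_right h1 (pow_pos (by omega) _)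
        _ = r ^ (ℓ 0 + 1) := by ring
    · have hlast : Fin.last 0 = (0 : Fin 1) := rfl
      rw [hlast, Fin.sum_univ_one, kid r a ha1 hra, pow_succ]
      ring
  | succ k ih =>
    intro ℓ hℓ
    set ℓ' : Fin (k + 1) → ℕ := fun i => ℓ i.castSucc with hℓ'def
    have hℓ' : StrictMono ℓ' := fun i j h => hℓ (by simpa using h)
    obtain ⟨M, hMev, hMlt, hMeq⟩ := ih ℓ' hℓ'
    set t := ℓ' (Fin.last k) + 1 with ht
    set L := ℓ (Fin.last (k + 1)) with hL
    have htL : t ≤ L := by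
      have : ℓ' (Fin.last k) < L := hℓ (Fin.castSucc_lt_last _)
      omega
    set c := (a - 1) + (r - a) * r ^ (L - t) with hc
    have hcev : ∀ j, Even (c / r ^ j % r) :=
      evd_two r hr2 (by omega) (by omega) (by omega) hev_a1 hev_ra
    have hpowLt : r ^ (L - t) * r ^ t = r ^ L := by rw [← pow_add]; congr 1; omega
    have hcbound : c + 1 ≤ r ^ (L - t + 1) := by
      have h1 : (1 : ℕ) ≤ r ^ (L - t) := Nat.one_le_pow _ _ (by omega)
      have h2 : c ≤ (r - 1) * r ^ (L - t) := by
        have : (a - 1) ≤ (a - 1) * r ^ (L - t) := Nat.le_mul_of_pos_right _ (by omega)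
        calc c ≤ (a - 1) * r ^ (L - t) + (r - a) * r ^ (L - t) := by omega
          _ = (r - 1) * r ^ (L - t) := by rw [← Nat.add_mul]; congr 1; omega
      have h3 : (r - 1) * r ^ (L - t) + 1 * r ^ (L - t) = r * r ^ (L - t) := by
        rw [← Nat.add_mul]; congr 1; omega
      have h4 : r ^ (L - t + 1) = r * r ^ (L - t) := by rw [pow_succ]; ring
      omega
    refine ⟨M + c * r ^ t, ?_, ?_, ?_⟩
    · exact evd_add r hr2 hMlt hMev hcev
    · calc M + c * r ^ t < r ^ t + c * r ^ t := by omega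
        _ = (c + 1) * r ^ t := by ring
        _ ≤ r ^ (L - t + 1) * r ^ t := Nat.mul_le_mul_right _ hcbound
        _ = r ^ (L + 1) := by rw [← pow_add]; congr 1; omega
    · rw [Fin.sum_univ_castSucc, Nat.mul_add]
      have hS' : a * (r - 1) * ∑ i : Fin (k + 1), r ^ (ℓ i.castSucc)
          = M + (a - 1) * r ^ t := hMeq
      rw [hS', kid r a ha1 hra]
      have hexp : ((r - a) + (a - 1) * r) * r ^ (ℓ (Fin.last (k + 1)))
          = (r - a) * r ^ L + (a - 1) * r ^ (L + 1) := by
        rw [← hL, pow_succ]; ring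
      rw [hexp]
      have hct : c * r ^ t = (a - 1) * r ^ t + (r - a) * r ^ L := by
        rw [hc, Nat.add_mul, mul_assoc, hpowLt]
      omega

/-- if `m = 2a(r^{ℓ₁} + ⋯ + r^{ℓ_k})` with `ℓ₁ < ⋯ < ℓ_k`, `a` odd,
`1 ≤ a ≤ r-1`, and `r ≥ 3` an odd prime, then every base-`r` digit of `m(r-1)/2` is even. -/
theorem stmt6 (r : ℕ) (hr : r.Prime) (hodd : Odd r) (h3 : 3 ≤ r)
    (k : ℕ) (ℓ : Fin k → ℕ) (hℓ : StrictMono ℓ)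
    (a : ℕ) (ha1 : 1 ≤ a) (ha2 : a ≤ r - 1) (haodd : Odd a)
    (m : ℕ) (hm : m = 2 * a * ∑ i, r ^ (ℓ i)) :
    ∀ j : ℕ, Even (m * (r - 1) / 2 / r ^ j % r) := by
  have hr2 : 2 ≤ r := by omega
  have hhalf : m * (r - 1) / 2 = a * (r - 1) * ∑ i, r ^ (ℓ i) := by
    rw [hm]
    rw [show 2 * a * (∑ i, r ^ ℓ i) * (r - 1) = 2 * (a * (r - 1) * ∑ i, r ^ ℓ i) by ring]
    exact Nat.mul_div_cancel_left _ (by omega)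
  rw [hhalf]
  cases k with
  | zero => intro j; simp
  | succ n =>
    obtain ⟨M, hMev, hMlt, hMeq⟩ := inv_lemma r hr2 hodd a ha1 ha2 haodd n ℓ hℓ
    rw [hMeq]
    have hev_a1 : Even (a - 1) := by
      rw [Nat.even_iff]; rw [Nat.odd_iff] at haodd; omega
    exact evd_add r hr2 hMlt hMev (evd_single r hr2 (by omega) hev_a1)
end

section
/- Let H = B_1 ∪ B_2 be a real hyperplane in ℂ^N centered about a complex linear hyperplane H_ℂ = ⟨α⟩^⊥ (α ≠ 0), with B_j = { z : ⟨α,z⟩ = t(−1)^j for some t ≥ 0 }. Suppose g_1,...,g_n ∈ ℂ^N are the Gale transform of affinely spanning points x_1,...,x_n ∈ ℂ^d, and there are disjoint nonempty I_1, I_2 ⊆ [n] with g_i in the interior of B_j for i ∈ I_j and g_i ∈ H_ℂ for i ∉ I_1 ⊔ I_2. Then there exist reals t'_i > 0 for i ∈ I_1 ⊔ I_2 with ∑_{i∈I_1} t'_i = ∑_{i∈I_2} t'_i = 1 and ∑_{i∈I_1} t'_i x_i = ∑_{i∈I_2} t'_i x_i; that is, (I_1, I_2) is a proper Radon (Tverberg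 2-)partition for the points x_i. -/
/-- a distribution of the Gale dual by a real hyperplane centered about
a complex linear hyperplane yields a proper Radon (Tverberg 2-)partition of the points. -/
theorem stmt12 (n d : ℕ)
    (x : Fin n → Fin d → ℂ) (g : Fin n → Fin (n - d - 1) → ℂ)
    (hx : affineSpan ℂ (Set.range x) = ⊤)
    (hg : IsGaleTransform x g)
    (α : Fin (n - d - 1) → ℂ) (hα : α ≠ 0)
    (I : Fin 2 → Finset (Fin n))
    (hne : ∀ j, (I j).Nonempty)
    (hdisj : Disjoint (I 0) (I 1))
    (h0 : ∀ i ∈ I 0, ∃ t : ℝ, 0 < t ∧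
      ∑ k, α k * starRingEnd ℂ (g i k) = -(t : ℂ))
    (h1 : ∀ i ∈ I 1, ∃ t : ℝ, 0 < t ∧
      ∑ k, α k * starRingEnd ℂ (g i k) = (t : ℂ))
    (hC : ∀ i, i ∉ I 0 → i ∉ I 1 →
      ∑ k, α k * starRingEnd ℂ (g i k) = 0) :
    ∃ t' : Fin n → ℝ, (∀ i, i ∈ I 0 ∪ I 1 → 0 < t' i) ∧
      ∑ i ∈ I 0, t' i = 1 ∧ ∑ i ∈ I 1, t' i = 1 ∧
      ∑ i ∈ I 0, (t' i : ℂ) • x i = ∑ i ∈ I 1, (t' i : ℂ) • x i := by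

  classical
  obtain ⟨b, hb0, -, -, hgb⟩ := hg
  set lam : Fin n → ℂ := fun i => ∑ k, α k * b k i with hlamdef
  have hlamval : ∀ i, ∑ k, α k * starRingEnd ℂ (g i k) = lam i := by
    intro i
    simp [hlamdef, hgb]
  have hlin : (galeMatrix x).mulVecLin lam = 0 := by
    have hl : lam = ∑ k, α k • b k := by
      funext i
      simp [hlamdef, Finset.sum_apply]
    rw [hl, map_sum]
    simp [hb0]
  have hrow : ∀ r : Fin (d+1), ∑ j, galeMatrix x r j * lam j = 0 := by
    intro r
    have h := congrFun ((Matrix.mulVecLin_apply _ _).symm.trans hlin) r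
    simpa [Matrix.mulVec, dotProduct] using h
  -- values of lam
  have ht0 : ∀ i ∈ I 0, ∃ s : ℝ, 0 < s ∧ lam i = -(s : ℂ) := by
    intro i hi
    obtain ⟨s, hs, heq⟩ := h0 i hi
    exact ⟨s, hs, (hlamval i).symm.trans heq⟩
  have ht1 : ∀ i ∈ I 1, ∃ s : ℝ, 0 < s ∧ lam i = (s : ℂ) := by
    intro i hi
    obtain ⟨s, hs, heq⟩ := h1 i hi
    exact ⟨s, hs, (hlamval i).symm.trans heq⟩
  have hz : ∀ i, i ∉ I 0 → i ∉ I 1 → lam i = 0 := by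
    intro i hi0 hi1
    exact (hlamval i).symm.trans (hC i hi0 hi1)
  set t : Fin n → ℝ := fun i => if i ∈ I 0 then -(lam i).re else (lam i).re with htdef
  have ht0' : ∀ i ∈ I 0, 0 < t i ∧ lam i = -((t i : ℝ) : ℂ) := by
    intro i hi
    obtain ⟨s, hs, heq⟩ := ht0 i hi
    have : t i = s := by simp [htdef, hi, heq]
    rw [this]; exact ⟨hs, heq⟩
  have ht1' : ∀ i ∈ I 1, 0 < t i ∧ lam i = ((t i : ℝ) : ℂ) := by
    intro i hi
    obtain ⟨s, hs, heq⟩ := ht1 i hi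
    have hni : i ∉ I 0 := fun h => (Finset.disjoint_left.mp hdisj h) hi
    have : t i = s := by simp [htdef, hni, heq]
    rw [this]; exact ⟨hs, heq⟩
  -- restrict sums to the union
  have hrestrict : ∀ f : Fin n → ℂ,
      (∑ j, f j * lam j) = ∑ j ∈ I 0, f j * lam j + ∑ j ∈ I 1, f j * lam j := by
    intro f
    rw [← Finset.sum_union hdisj]
    symm
    apply Finset.sum_subset (Finset.subset_univ _)
    intro i _ hi
    rw [Finset.mem_union] at hi
    push_neg at hi
    rw [hz i hi.1 hi.2, mul_zero]
  -- sum of lam is zero (last row)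
  have hlast : ∑ j, lam j = 0 := by
    have h := hrow ⟨d, Nat.lt_succ_self d⟩
    simpa [galeMatrix] using h
  have hS : (∑ i ∈ I 0, (t i : ℂ)) = ∑ i ∈ I 1, (t i : ℂ) := by
    have h := hrestrict (fun _ => 1)
    simp only [one_mul] at h
    rw [hlast] at h
    rw [Finset.sum_congr rfl (fun i hi => (ht0' i hi).2)] at h
    rw [Finset.sum_congr rfl (fun i hi => (ht1' i hi).2)] at h
    rw [Finset.sum_neg_distrib] at h
    linear_combination h
  have hSr : (∑ i ∈ I 0, t i) = ∑ i ∈ I 1, t i := by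
    exact_mod_cast hS
  set S : ℝ := ∑ i ∈ I 0, t i with hSdef
  have hSpos : 0 < S := Finset.sum_pos (fun i hi => (ht0' i hi).1) (hne 0)
  -- coordinate equations
  have hcoord : ∀ r : Fin d,
      ∑ i ∈ I 0, (t i : ℂ) * x i r = ∑ i ∈ I 1, (t i : ℂ) * x i r := by
    intro r
    have h := hrow ⟨(r : ℕ), Nat.lt_succ_of_lt r.isLt⟩
    have h2 : ∑ j, x j r * lam j = 0 := by
      simpa [galeMatrix, r.isLt] using h
    rw [hrestrict (fun j => x j r)] at h2
    have e0 : ∑ i ∈ I 0, x i r * lam i = ∑ i ∈ I 0, -((t i : ℂ) * x i r) :=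
      Finset.sum_congr rfl (fun i hi => by rw [(ht0' i hi).2]; ring)
    have e1 : ∑ i ∈ I 1, x i r * lam i = ∑ i ∈ I 1, (t i : ℂ) * x i r :=
      Finset.sum_congr rfl (fun i hi => by rw [(ht1' i hi).2]; ring)
    rw [e0, e1, Finset.sum_neg_distrib] at h2
    linear_combination -h2
  refine ⟨fun i => t i / S, ?_, ?_, ?_, ?_⟩
  · intro i hi
    rw [Finset.mem_union] at hi
    rcases hi with hi | hi
    · exact div_pos (ht0' i hi).1 hSpos
    · exact div_pos (ht1' i hi).1 hSpos
  · rw [← Finset.sum_div, ← hSdef]; exact div_self hSpos.ne'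
  · rw [← Finset.sum_div, ← hSr]; exact div_self hSpos.ne'
  · funext r
    simp only [Finset.sum_apply, Pi.smul_apply, smul_eq_mul, Complex.ofReal_div]
    have := hcoord r
    calc ∑ i ∈ I 0, ((t i : ℂ) / S) * x i r
        = (S : ℂ)⁻¹ * ∑ i ∈ I 0, (t i : ℂ) * x i r := by
          rw [Finset.mul_sum]; exact Finset.sum_congr rfl (fun i _ => by ring)
      _ = (S : ℂ)⁻¹ * ∑ i ∈ I 1, (t i : ℂ) * x i r := by rw [this]
      _ = ∑ i ∈ I 1, ((t i : ℂ) / S) * x i r := by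
          rw [Finset.mul_sum]; exact Finset.sum_congr rfl (fun i _ => by ring)
end

section
/- Let r ≥ 3 and suppose a_1,...,a_n affinely span ℝ^d with Gale transform g_1,...,g_n ∈ ℝ^{n-d-1}. Suppose I_1,...,I_r ⊆ [n] are pairwise disjoint and nonempty and there exist t_i > 0 (i ∈ ⊔_j I_j) with ∑_{i∈I_j} t_i = 1 for all j and ∑_{i∈I_1} t_i a_i = ... = ∑_{i∈I_r} t_i a_i. Then there exist vectors α_1,...,α_r ∈ ℝ^{n-d-1} with ∑_{j=1}^r α_j = 0, any r−1 of them linearly independent, such that for all i and j: ⟨α_j, g_i⟩ = t_i if i ∈ I_j, ⟨α_j, g_i⟩ = −t_i if i ∈ I_{j−1} (indices mod r), and ⟨α_j, g_i⟩ = 0 otherwise. -/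
/-! The vectors `λ_j = t·1_{I_j} - t·1_{I_{j-1}}` are affine dependences of the `a_i`, so they lie
in the kernel of the Gale matrix. The Gale basis identifies `K^{n-d-1}` injectively and linearly
with that kernel, and `α_j` is the preimage of `λ_j`: then `⟨α_j, g_i⟩ = λ_j i`, and linear
relations among the `α_j` are exactly those among the `λ_j`. The `λ_j` sum to zero by a cyclic
shift, and a relation `∑ c_m λ_m = 0` evaluated at a point `i ∈ I_m` reads `(c_m - c_{m+1}) t_i = 0`;
so `c` is constant around the cycle, and vanishes as soon as one `c_j` does. -/

open Function

open Fin.NatCast in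
theorem Fin.eq_of_forall_add_one_eq {α : Type*} {r : ℕ} [NeZero r] {f : Fin r → α}
    (hf : ∀ m, f (m + 1) = f m) (m m' : Fin r) : f m = f m' := by
  have hstep : ∀ k : ℕ, f (m' + (k : Fin r)) = f m' := by
    intro k
    induction k with
    | zero => simp
    | succ k ih => rw [Nat.cast_succ, ← add_assoc, hf, ih]
  simpa using hstep (m - m').val

theorem linearIndependent_ne_of_forall_sum_smul_eq_zero {ι R M : Type*} [Fintype ι]
    [DecidableEq ι] [Ring R] [AddCommGroup M] [Module R M] {v : ι → M} (j : ι)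
    (h : ∀ c : ι → R, c j = 0 → ∑ i, c i • v i = 0 → ∀ i, c i = 0) :
    LinearIndependent R (fun k : {k // k ≠ j} => v k) := by
  have hon : LinearIndepOn R v (Finset.univ.erase j : Finset ι) := by
    refine linearIndepOn_finset_iff.mpr fun c hc i hi => ?_
    have hsum : ∑ i, update c j 0 i • v i = 0 := by
      rw [← Finset.sum_erase (a := j) _ (by simp), ← hc]
      exact Finset.sum_congr rfl fun k hk => by
        rw [update_of_ne (Finset.ne_of_mem_erase hk)]
    simpa [update_of_ne (Finset.ne_of_mem_erase hi)] using h _ (by simp) hsum i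
  exact hon.mono fun k hk => by simpa using hk.out

section CyclicDiff

variable {ι K : Type*} [Field K] {r : ℕ} [NeZero r] (I : Fin r → Finset ι) (t : ι → K)

noncomputable def cyclicDiff (j : Fin r) : ι → K :=
  (I j : Set ι).indicator t - (I (j - 1) : Set ι).indicator t

theorem cyclicDiff_apply {j : Fin r} (hdisj : Disjoint (I j) (I (j - 1))) (i : ι) :
    (i ∈ I j → cyclicDiff I t j i = t i) ∧ (i ∈ I (j - 1) → cyclicDiff I t j i = -t i) ∧
      (i ∉ I j → i ∉ I (j - 1) → cyclicDiff I t j i = 0) := by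
  refine ⟨fun hi => ?_, fun hi => ?_, fun hi hi' => ?_⟩
  · simp [cyclicDiff, hi, Finset.disjoint_left.mp hdisj hi]
  · simp [cyclicDiff, hi, Finset.disjoint_right.mp hdisj hi]
  · simp [cyclicDiff, hi, hi']

theorem sum_cyclicDiff : ∑ j, cyclicDiff I t j = 0 := by
  rw [← sub_eq_zero.mpr ((Equiv.subRight 1).sum_comp fun j => (I j : Set ι).indicator t).symm]
  simp only [cyclicDiff, Finset.sum_sub_distrib, Equiv.subRight_apply]

theorem sum_cyclicDiff_smul [Fintype ι] {M : Type*} [AddCommGroup M] [Module K M] (f : ι → M)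
    (j : Fin r) :
    ∑ i, cyclicDiff I t j i • f i = ∑ i ∈ I j, t i • f i - ∑ i ∈ I (j - 1), t i • f i := by
  simp only [cyclicDiff, Pi.sub_apply, sub_smul, Finset.sum_sub_distrib,
    ← Set.indicator_smul_apply_left, Finset.sum_indicator_subset _ (Finset.subset_univ _)]

variable {I}

theorem sum_mul_cyclicDiff_of_mem (hdisj : Pairwise (Disjoint on I)) (c : Fin r → K) {m₀ : Fin r}
    {i : ι} (hi : i ∈ I m₀) : ∑ m, c m * cyclicDiff I t m i = (c m₀ - c (m₀ + 1)) * t i := by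
  have hpick : ∀ f : Fin r → K, ∑ m, f m * (I m : Set ι).indicator t i = f m₀ * t i := by
    intro f
    rw [Finset.sum_eq_single m₀ (fun m _ hm => ?_) (by simp)]
    · simp [hi]
    · simp [Finset.disjoint_right.mp (hdisj hm) hi]
  have hshift : ∑ m, c m * (I (m - 1) : Set ι).indicator t i = c (m₀ + 1) * t i := by
    rw [← Equiv.sum_comp (Equiv.addRight 1)]
    simpa using hpick fun m => c (m + 1)
  simp only [cyclicDiff, Pi.sub_apply, mul_sub, Finset.sum_sub_distrib, hpick, hshift, sub_mul]

theorem eq_of_sum_smul_cyclicDiff_eq_zero (hne : ∀ j, (I j).Nonempty)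
    (hdisj : Pairwise (Disjoint on I)) (ht : ∀ j, ∀ i ∈ I j, t i ≠ 0) {c : Fin r → K}
    (hc : ∑ m, c m • cyclicDiff I t m = 0) (m m' : Fin r) : c m = c m' := by
  refine Fin.eq_of_forall_add_one_eq (fun m => ?_) m m'
  obtain ⟨i, hi⟩ := hne m
  have hci := congrFun hc i
  simp only [Finset.sum_apply, Pi.smul_apply, smul_eq_mul, Pi.zero_apply,
    sum_mul_cyclicDiff_of_mem t hdisj c hi, mul_eq_zero, ht m i hi, or_false, sub_eq_zero] at hci
  exact hci.symm

theorem linearIndependent_cyclicDiff (hne : ∀ j, (I j).Nonempty)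
    (hdisj : Pairwise (Disjoint on I)) (ht : ∀ j, ∀ i ∈ I j, t i ≠ 0) (j : Fin r) :
    LinearIndependent K (fun k : {k // k ≠ j} => cyclicDiff I t k) :=
  linearIndependent_ne_of_forall_sum_smul_eq_zero j fun _ hcj hc m =>
    (eq_of_sum_smul_cyclicDiff_eq_zero t hne hdisj ht hc m j).trans hcj

end CyclicDiff

section Gale

variable {K : Type*} [RCLike K] {d n : ℕ}

theorem mem_ker_galeMatrix_iff (a : Fin n → Fin d → K) (v : Fin n → K) :
    v ∈ LinearMap.ker (galeMatrix a).mulVecLin ↔ ∑ i, v i • a i = 0 ∧ ∑ i, v i = 0 := by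
  rw [LinearMap.mem_ker, Matrix.mulVecLin_apply, funext_iff, Fin.forall_fin_succ', funext_iff]
  simp [Matrix.mulVec, dotProduct, galeMatrix, Finset.sum_apply, mul_comm]

theorem IsGaleTransform.exists_linearMap {a : Fin n → Fin d → K} {g : Fin n → Fin (n - d - 1) → K}
    (hg : IsGaleTransform a g) :
    ∃ L : (Fin (n - d - 1) → K) →ₗ[K] (Fin n → K), Injective L ∧
      LinearMap.range L = LinearMap.ker (galeMatrix a).mulVecLin ∧
      ∀ α i, L α i = ∑ k, α k * starRingEnd K (g i k) := by
  obtain ⟨b, -, hb, hspan, hgb⟩ := hg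
  refine ⟨Fintype.linearCombination K b, hb.fintypeLinearCombination_injective,
    by rw [Fintype.range_linearCombination, hspan], fun α i => ?_⟩
  simp [Fintype.linearCombination_apply, Finset.sum_apply, hgb]

theorem cyclicDiff_mem_ker_galeMatrix {r : ℕ} [NeZero r] {a : Fin n → Fin d → K}
    {I : Fin r → Finset (Fin n)} {t : Fin n → K} (hsum : ∀ j, ∑ i ∈ I j, t i = 1)
    (hbary : ∀ j, ∑ i ∈ I j, t i • a i = ∑ i ∈ I 0, t i • a i) (j : Fin r) :
    cyclicDiff I t j ∈ LinearMap.ker (galeMatrix a).mulVecLin := by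
  refine (mem_ker_galeMatrix_iff a _).mpr ⟨?_, ?_⟩
  · rw [sum_cyclicDiff_smul, hbary j, hbary (j - 1), sub_self]
  · simpa [hsum] using sum_cyclicDiff_smul I t (fun _ => (1 : K)) j

end Gale

theorem stmt13_general (r n d : ℕ) (hr : 3 ≤ r) [NeZero r]
    (a : Fin n → Fin d → ℝ) (g : Fin n → Fin (n - d - 1) → ℝ)
    (hg : IsGaleTransform a g)
    (I : Fin r → Finset (Fin n))
    (hne : ∀ j, (I j).Nonempty)
    (hdisj : Pairwise (Function.onFun Disjoint I))
    (t : Fin n → ℝ) (ht : ∀ j, ∀ i ∈ I j, 0 < t i)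
    (hsum1 : ∀ j, ∑ i ∈ I j, t i = 1)
    (heq : ∀ j, ∑ i ∈ I j, t i • a i = ∑ i ∈ I 0, t i • a i) :
    ∃ α : Fin r → (Fin (n - d - 1) → ℝ),
      ∑ j, α j = 0 ∧
      (∀ j : Fin r, LinearIndependent ℝ (fun k : {k : Fin r // k ≠ j} => α k)) ∧
      ∀ j i,
        (i ∈ I j → ∑ k, α j k * g i k = t i) ∧
        (i ∈ I (j - 1) → ∑ k, α j k * g i k = - t i) ∧
        (i ∉ I j → i ∉ I (j - 1) → ∑ k, α j k * g i k = 0) := by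
  obtain ⟨L, hL, hrange, hLg⟩ := hg.exists_linearMap
  have hmem : ∀ j, cyclicDiff I t j ∈ LinearMap.range L := fun j =>
    hrange ▸ cyclicDiff_mem_ker_galeMatrix hsum1 heq j
  choose α hα using hmem
  have hone : (1 : Fin r) ≠ 0 := by
    rw [Ne, Fin.one_eq_zero_iff]
    omega
  refine ⟨α, hL ?_, fun j => ?_, fun j i => ?_⟩
  · rw [map_sum, map_zero, ← sum_cyclicDiff I t]
    exact Finset.sum_congr rfl fun j _ => hα j
  · refine LinearIndependent.of_comp L ?_
    simpa only [comp_def, hα] using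
      linearIndependent_cyclicDiff t hne hdisj (fun j i hi => (ht j i hi).ne') j
  · have hcoord : ∑ k, α j k * g i k = cyclicDiff I t j i := by
      simpa [hα] using (hLg (α j) i).symm
    rw [hcoord]
    exact cyclicDiff_apply I t (hdisj fun h => hone (sub_eq_self.mp h.symm)) i

/-- a proper Tverberg `r`-partition yields vectors `α_j` summing to zero,
any `r-1` independent, with `⟨α_j, g_i⟩` equal to `t i`, `-t i`, `0` appropriately. -/
theorem stmt13 (r n d : ℕ) (hr : 3 ≤ r) [NeZero r]
    (a : Fin n → Fin d → ℝ) (g : Fin n → Fin (n - d - 1) → ℝ)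
    (ha : affineSpan ℝ (Set.range a) = ⊤)
    (hg : IsGaleTransform a g)
    (I : Fin r → Finset (Fin n))
    (hne : ∀ j, (I j).Nonempty)
    (hdisj : Pairwise (Function.onFun Disjoint I))
    (t : Fin n → ℝ) (ht : ∀ j, ∀ i ∈ I j, 0 < t i)
    (hsum1 : ∀ j, ∑ i ∈ I j, t i = 1)
    (heq : ∀ j, ∑ i ∈ I j, t i • a i = ∑ i ∈ I 0, t i • a i) :
    ∃ α : Fin r → (Fin (n - d - 1) → ℝ),
      ∑ j, α j = 0 ∧
      (∀ j : Fin r, LinearIndependent ℝ (fun k : {k : Fin r // k ≠ j} => α k)) ∧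
      ∀ j i,
        (i ∈ I j → ∑ k, α j k * g i k = t i) ∧
        (i ∈ I (j - 1) → ∑ k, α j k * g i k = - t i) ∧
        (i ∉ I j → i ∉ I (j - 1) → ∑ k, α j k * g i k = 0) :=
  stmt13_general r n d hr a g hg I hne hdisj t ht hsum1 heq
end

section
/- Let r ≥ 3, let α_1,...,α_r ∈ ℝ^N satisfy ∑_j α_j = 0 with any r−1 linearly independent, and let g_1,...,g_n ∈ ℝ^N be the Gale transform of affinely spanning a_1,...,a_n ∈ ℝ^d. Suppose I_1,...,I_r ⊆ [n] are pairwise disjoint and nonempty, and for all i,j: if i ∈ I_j then ⟨α_j, g_i⟩ > 0 and ⟨α_k, g_i⟩ = 0 for k ∉ {j−1, j} (mod r); if i ∉ ⊔_j I_j then ⟨α_j, g_i⟩ = 0 for all j. Then there exist t_i > 0 (i ∈ ⊔_j I_j) with ∑_{i∈I_j} t_i = 1 for all j and ∑_{i∈I_1} t_i a_i = ... = ∑_{i∈I_r} t_i a_i. -/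
open Finset Matrix

theorem galeMatrix_mulVec_eq_zero_iff {K : Type*} [RCLike K] {d n : ℕ}
    (a : Fin n → Fin d → K) (v : Fin n → K) :
    galeMatrix a *ᵥ v = 0 ↔ ∑ i, v i = 0 ∧ ∑ i, v i • a i = 0 := by
  rw [funext_iff, Fin.forall_fin_succ', and_comm, funext_iff]
  simp [mulVec, dotProduct, galeMatrix, Finset.sum_apply, mul_comm]

theorem IsGaleTransform.galeMatrix_mulVec_dotProduct_eq_zero {d n : ℕ} {a : Fin n → Fin d → ℝ}
    {g : Fin n → Fin (n - d - 1) → ℝ} (hg : IsGaleTransform a g) (α : Fin (n - d - 1) → ℝ) :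
    galeMatrix a *ᵥ (fun i => α ⬝ᵥ g i) = 0 := by
  obtain ⟨b, hb, -, -, hgb⟩ := hg
  have hcomb : (fun i => α ⬝ᵥ g i) = ∑ k, α k • b k := by
    ext i
    simp [dotProduct, hgb]
  rw [hcomb, mulVec_sum]
  exact sum_eq_zero fun k _ => by rw [mulVec_smul, ← mulVecLin_apply, hb, smul_zero]

theorem Fin.apply_eq_apply_zero_of_forall_apply_add_one {r : ℕ} [NeZero r] {β : Type*}
    {f : Fin r → β} (h : ∀ j, f (j + 1) = f j) (j : Fin r) : f j = f 0 := by
  obtain ⟨m, rfl⟩ : ∃ m, r = m + 1 := Nat.exists_eq_succ_of_ne_zero (NeZero.ne r)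
  induction j using Fin.induction with
  | zero => rfl
  | succ i ih => rw [← Fin.coeSucc_eq_succ, h, ih]

theorem exists_forall_mem_eq_of_pairwise_disjoint {ι α β : Type*} [Zero β] {I : ι → Finset α}
    (hdisj : Pairwise (Function.onFun Disjoint I)) (u : ι → α → β) :
    ∃ t : α → β, ∀ j, ∀ i ∈ I j, t i = u j i := by
  classical
  refine ⟨fun i => if h : ∃ j, i ∈ I j then u h.choose i else 0, fun j i hi => ?_⟩
  have hex : ∃ j, i ∈ I j := ⟨j, hi⟩
  have hj : hex.choose = j := by
    by_contra hne
    exact disjoint_left.mp (hdisj hne) hex.choose_spec hi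
  simp only [dif_pos hex, hj]

section CyclicFan

variable {R M : Type*} [Ring R] [AddCommGroup M] [Module R M] {r n : ℕ} [NeZero r]
  {L : Fin r → Fin n → R} {I : Fin r → Finset (Fin n)}

theorem apply_sub_one_eq_neg_of_mem (hr : (1 : Fin r) ≠ 0) (hcol : ∀ i, ∑ j, L j i = 0)
    (hzero : ∀ j, ∀ i ∈ I j, ∀ k, k ≠ j - 1 → k ≠ j → L k i = 0) {j : Fin r} {i : Fin n}
    (hi : i ∈ I j) : L (j - 1) i = -L j i := by
  have hsum := hcol i
  rw [sum_eq_add_of_mem (j - 1) j (mem_univ _) (mem_univ _) (by simpa using hr)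
    fun k _ hk => hzero j i hi k hk.1 hk.2] at hsum
  exact eq_neg_of_add_eq_zero_left hsum

theorem apply_eq_zero_of_notMem_of_notMem
    (hzero : ∀ j, ∀ i ∈ I j, ∀ k, k ≠ j - 1 → k ≠ j → L k i = 0)
    (hout : ∀ i, (∀ j, i ∉ I j) → ∀ j, L j i = 0) {j : Fin r} {i : Fin n}
    (hij : i ∉ I j) (hij' : i ∉ I (j + 1)) : L j i = 0 := by
  by_cases hex : ∃ k, i ∈ I k
  · obtain ⟨k, hik⟩ := hex
    refine hzero k i hik j (fun h => hij' ?_) (fun h => hij (h ▸ hik))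
    rwa [h, sub_add_cancel]
  · exact hout i (not_exists.mp hex) j

theorem sum_smul_eq_sum_smul_zero (hr : (1 : Fin r) ≠ 0)
    (hdisj : Pairwise (Function.onFun Disjoint I)) (hcol : ∀ i, ∑ j, L j i = 0)
    (hzero : ∀ j, ∀ i ∈ I j, ∀ k, k ≠ j - 1 → k ≠ j → L k i = 0)
    (hout : ∀ i, (∀ j, i ∉ I j) → ∀ j, L j i = 0) (w : Fin n → M)
    (hdep : ∀ j, ∑ i, L j i • w i = 0) (j : Fin r) :
    ∑ i ∈ I j, L j i • w i = ∑ i ∈ I 0, L 0 i • w i := by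
  classical
  refine Fin.apply_eq_apply_zero_of_forall_apply_add_one
    (f := fun k => ∑ i ∈ I k, L k i • w i) (fun j => ?_) j
  have hsplit : ∑ i, L j i • w i = ∑ i ∈ I j, L j i • w i + ∑ i ∈ I (j + 1), L j i • w i := by
    rw [← sum_union (hdisj (by simpa using hr.symm))]
    refine (sum_subset (subset_univ _) fun i _ hi => ?_).symm
    rw [mem_union, not_or] at hi
    rw [apply_eq_zero_of_notMem_of_notMem hzero hout hi.1 hi.2, zero_smul]
  have hnext : ∑ i ∈ I (j + 1), L j i • w i = -∑ i ∈ I (j + 1), L (j + 1) i • w i := by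
    rw [← sum_neg_distrib]
    refine sum_congr rfl fun i hi => ?_
    rw [← neg_smul, ← apply_sub_one_eq_neg_of_mem hr hcol hzero hi, add_sub_cancel_right]
  have hdep_j := hdep j
  rw [hsplit, hnext, add_neg_eq_zero] at hdep_j
  exact hdep_j.symm

end CyclicFan

theorem stmt14_general (r n d : ℕ) (hr : 3 ≤ r) [NeZero r]
    (a : Fin n → Fin d → ℝ) (g : Fin n → Fin (n - d - 1) → ℝ)
    (hg : IsGaleTransform a g)
    (α : Fin r → (Fin (n - d - 1) → ℝ))
    (hαsum : ∑ j, α j = 0)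
    (I : Fin r → Finset (Fin n))
    (hne : ∀ j, (I j).Nonempty)
    (hdisj : Pairwise (Function.onFun Disjoint I))
    (hpos : ∀ j, ∀ i ∈ I j, 0 < ∑ k, α j k * g i k)
    (hzero : ∀ j, ∀ i ∈ I j, ∀ k : Fin r, k ≠ j - 1 → k ≠ j →
      ∑ l, α k l * g i l = 0)
    (hout : ∀ i, (∀ j, i ∉ I j) → ∀ j, ∑ k, α j k * g i k = 0) :
    ∃ t : Fin n → ℝ, (∀ j, ∀ i ∈ I j, 0 < t i) ∧
      (∀ j, ∑ i ∈ I j, t i = 1) ∧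
      ∀ j, ∑ i ∈ I j, t i • a i = ∑ i ∈ I 0, t i • a i := by
  set L : Fin r → Fin n → ℝ := fun j i => α j ⬝ᵥ g i
  have h1 : (1 : Fin r) ≠ 0 := by rw [Ne, Fin.one_eq_zero_iff]; omega
  have hcol : ∀ i, ∑ j, L j i = 0 := fun i => by simp [L, ← sum_dotProduct, hαsum]
  have hdep := fun j => (galeMatrix_mulVec_eq_zero_iff a (fun i => L j i)).1
    (hg.galeMatrix_mulVec_dotProduct_eq_zero (α j))
  have hbary := sum_smul_eq_sum_smul_zero h1 hdisj hcol hzero hout a fun j => (hdep j).2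
  have hmass := sum_smul_eq_sum_smul_zero h1 hdisj hcol hzero hout (fun _ => (1 : ℝ))
    fun j => by simpa using (hdep j).1
  simp only [smul_eq_mul, mul_one] at hmass
  set s := ∑ i ∈ I 0, L 0 i
  have hs : 0 < s := sum_pos (hpos 0) (hne 0)
  obtain ⟨t, ht⟩ := exists_forall_mem_eq_of_pairwise_disjoint hdisj fun j i => L j i / s
  refine ⟨t, fun j i hi => ht j i hi ▸ div_pos (hpos j i hi) hs, fun j => ?_, fun j => ?_⟩
  · rw [sum_congr rfl (ht j), ← sum_div, hmass, div_self hs.ne']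
  · have hscale : ∀ k, ∑ i ∈ I k, t i • a i = s⁻¹ • ∑ i ∈ I k, L k i • a i := fun k => by
      rw [smul_sum]
      exact sum_congr rfl fun i hi => by rw [ht k i hi, smul_smul, div_eq_inv_mul]
    rw [hscale, hscale, hbary]

/-- a linear `r`-fan distribution of the Gale dual (given by the `α_j`)
yields a proper Tverberg `r`-partition of the points `a_i`. -/
theorem stmt14 (r n d : ℕ) (hr : 3 ≤ r) [NeZero r]
    (a : Fin n → Fin d → ℝ) (g : Fin n → Fin (n - d - 1) → ℝ)
    (ha : affineSpan ℝ (Set.range a) = ⊤)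
    (hg : IsGaleTransform a g)
    (α : Fin r → (Fin (n - d - 1) → ℝ))
    (hαsum : ∑ j, α j = 0)
    (hαind : ∀ j : Fin r, LinearIndependent ℝ (fun k : {k : Fin r // k ≠ j} => α k))
    (I : Fin r → Finset (Fin n))
    (hne : ∀ j, (I j).Nonempty)
    (hdisj : Pairwise (Function.onFun Disjoint I))
    (hpos : ∀ j, ∀ i ∈ I j, 0 < ∑ k, α j k * g i k)
    (hzero : ∀ j, ∀ i ∈ I j, ∀ k : Fin r, k ≠ j - 1 → k ≠ j →
      ∑ l, α k l * g i l = 0)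
    (hout : ∀ i, (∀ j, i ∉ I j) → ∀ j, ∑ k, α j k * g i k = 0) :
    ∃ t : Fin n → ℝ, (∀ j, ∀ i ∈ I j, 0 < t i) ∧
      (∀ j, ∑ i ∈ I j, t i = 1) ∧
      ∀ j, ∑ i ∈ I j, t i • a i = ∑ i ∈ I 0, t i • a i :=
  stmt14_general r n d hr a g hg α hαsum I hne hdisj hpos hzero hout
end

section
/- Let r ≥ 3 be odd, d, m ≥ 1, N = (r−1)d + m(r²−1)/2, and N_0 = N/2. In the ring F_r[y_1,y_2]/(y_1^{N_0+1}, y_2^{N_0+1}), the polynomial p(y_1,y_2) = y_1^{d(r−1)/2} y_2^{d(r−1)/2} (y_1 y_2^r − y_2 y_1^r)^{m(r−1)/2} is nonzero if and only if the binomial coefficient C(m(r−1)/2, m(r−1)/4·2) = C(m', m'/2) is nonzero mod r, where m' = m(r−1)/2 is assumed even. -/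
/-!
Every monomial of `p` has total degree `2 N₀`, so modulo `(y₁^(N₀+1), y₂^(N₀+1))` at most a
multiple of `y₁^N₀ y₂^N₀` survives. Writing `m' = 2k`, the `i`-th term of the binomial expansion of
`(y₁ y₂^r - y₂ y₁^r)^(2k)` has `y₁`-degree above `N₀` when `i < k` and `y₂`-degree above `N₀`
when `i > k` (this needs `r ≥ 2`), leaving only the middle term `±C(2k, k) y₁^N₀ y₂^N₀`. That
monomial lies outside the monomial ideal, so `p` vanishes exactly when `C(2k, k) = 0` in `𝔽_r`.
-/

open MvPolynomial

theorem lt_or_lt_of_add_eq_add_of_ne {i j k r : ℕ} (hr : 2 ≤ r) (hij : i + j = k + k)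
    (hik : i ≠ k) : k * (r + 1) < i + j * r ∨ k * (r + 1) < i * r + j := by
  rcases lt_or_gt_of_ne hik with h | h
  · left; nlinarith
  · right; nlinarith

namespace MvPolynomial

noncomputable def truncIdeal (R : Type*) [CommRing R] (n : ℕ) : Ideal (MvPolynomial (Fin 2) R) :=
  Ideal.span {X 0 ^ (n + 1), X 1 ^ (n + 1)}

variable {R : Type*} [CommRing R]

theorem mem_truncIdeal_iff {n : ℕ} {f : MvPolynomial (Fin 2) R} :
    f ∈ truncIdeal R n ↔ ∀ s ∈ f.support, n < s 0 ∨ n < s 1 := by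
  rw [truncIdeal, X_pow_eq_monomial, X_pow_eq_monomial,
    ← Set.image_pair (fun s => monomial s (1 : R)), mem_ideal_span_monomial_image]
  simp only [Set.mem_insert_iff, Set.mem_singleton_iff, exists_eq_or_imp, exists_eq_left,
    Finsupp.single_le_iff, Nat.succ_le_iff]

theorem X_pow_mul_X_pow_mem_truncIdeal {n e₀ e₁ : ℕ} (h : n < e₀ ∨ n < e₁) :
    (X 0 ^ e₀ * X 1 ^ e₁ : MvPolynomial (Fin 2) R) ∈ truncIdeal R n := by
  rw [mem_truncIdeal_iff, X_pow_eq_monomial, X_pow_eq_monomial, monomial_mul, one_mul]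
  intro s hs
  rw [Finset.mem_singleton.mp (support_monomial_subset hs)]
  simpa using h

theorem C_mul_X_pow_mul_X_pow_mem_truncIdeal_iff {n : ℕ} {c : R} :
    C c * (X 0 ^ n * X 1 ^ n) ∈ truncIdeal R n ↔ c = 0 := by
  refine ⟨fun h => ?_, fun h => by simp [h]⟩
  classical
  by_contra hc
  rw [X_pow_eq_monomial, X_pow_eq_monomial, monomial_mul, C_mul_monomial, mul_one, mul_one,
    mem_truncIdeal_iff, support_monomial, if_neg hc] at h
  simpa using h _ (Finset.mem_singleton_self _)

theorem mk_X_pow_mul_X_pow_mul_sub_pow_eq {a k r n : ℕ} (hr : 2 ≤ r)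
    (hn : n = a + k * (r + 1)) :
    Ideal.Quotient.mk (truncIdeal R n)
        (X 0 ^ a * X 1 ^ a * (X 0 * X 1 ^ r - X 1 * X 0 ^ r) ^ (k + k)) =
      Ideal.Quotient.mk (truncIdeal R n)
        (C ((-1) ^ k * ((k + k).choose k : R)) * (X 0 ^ n * X 1 ^ n)) := by
  rw [sub_pow, Finset.mul_sum, map_sum, Finset.sum_eq_single k]
  · rw [show k + (k + k) = k + 2 * k by ring, show k + k - k = k by omega, hn, pow_add, pow_mul]
    simp only [map_mul, map_pow, map_neg, map_one, map_natCast, neg_one_sq, one_pow]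
    ring
  · intro i hi hik
    obtain ⟨j, hij⟩ : ∃ j, i + j = k + k := ⟨k + k - i, by grind⟩
    rw [Ideal.Quotient.eq_zero_iff_mem, show k + k - i = j by omega]
    have hsplit : X 0 ^ a * X 1 ^ a * ((-1) ^ (i + (k + k)) * (X 0 * X 1 ^ r) ^ i *
        (X 1 * X 0 ^ r) ^ j * ((k + k).choose i : MvPolynomial (Fin 2) R)) =
        (-1) ^ (i + (k + k)) * ((k + k).choose i : MvPolynomial (Fin 2) R) *
          (X 0 ^ (a + (i + j * r)) * X 1 ^ (a + (i * r + j))) := by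
      ring
    rw [hsplit]
    refine Ideal.mul_mem_left _ _ (X_pow_mul_X_pow_mem_truncIdeal ?_)
    have := lt_or_lt_of_add_eq_add_of_ne hr hij hik
    omega
  · simp

end MvPolynomial

theorem stmt17_general (r d m : ℕ) (h3 : 3 ≤ r) (hodd : Odd r)
    (N N₀ m' : ℕ)
    (hN : N = (r - 1) * d + m * ((r ^ 2 - 1) / 2))
    (hN0 : N₀ = N / 2)
    (hm' : m' = m * (r - 1) / 2) (heven : Even m') :
    let Q := Ideal.span
      {(X 0 ^ (N₀ + 1) : MvPolynomial (Fin 2) (ZMod r)), X 1 ^ (N₀ + 1)}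
    (Ideal.Quotient.mk Q
        (X 0 ^ (d * (r - 1) / 2) * X 1 ^ (d * (r - 1) / 2) *
          (X 0 * X 1 ^ r - X 1 * X 0 ^ r) ^ m') ≠ 0)
      ↔ (Nat.choose m' (m' / 2) : ZMod r) ≠ 0 := by
  change Ideal.Quotient.mk (truncIdeal (ZMod r) N₀) _ ≠ 0 ↔ _
  obtain ⟨t, rfl⟩ := hodd
  obtain ⟨k, rfl⟩ := heven
  have hr1 : 2 * t + 1 - 1 = 2 * t := by omega
  have ha : d * (2 * t + 1 - 1) / 2 = d * t := by
    rw [hr1, mul_left_comm, Nat.mul_div_cancel_left _ two_pos]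
  rw [hr1, mul_left_comm, Nat.mul_div_cancel_left _ two_pos] at hm'
  have hN₀ : N₀ = d * t + k * (2 * t + 1 + 1) := by
    rw [Nat.sub_eq_of_eq_add (show (2 * t + 1) ^ 2 = 2 * (t * (2 * t + 2)) + 1 by ring),
      Nat.mul_div_cancel_left _ two_pos, hr1, ← mul_assoc, ← hm'] at hN
    rw [hN0, hN, show 2 * t * d + (k + k) * (2 * t + 2) = 2 * (d * t + k * (2 * t + 1 + 1))
      by ring, Nat.mul_div_cancel_left _ two_pos]
  rw [ha, show (k + k) / 2 = k by omega, Ne, Ne,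
    mk_X_pow_mul_X_pow_mul_sub_pow_eq (show 2 ≤ 2 * t + 1 by omega) hN₀,
    Ideal.Quotient.eq_zero_iff_mem, C_mul_X_pow_mul_X_pow_mem_truncIdeal_iff,
    ((isUnit_neg_one).pow k).mul_right_eq_zero]

/-- in `F_r[y₁,y₂]/(y₁^{N₀+1}, y₂^{N₀+1})`, the class of
`y₁^{d(r-1)/2} y₂^{d(r-1)/2} (y₁ y₂^r − y₂ y₁^r)^{m'}` is nonzero iff
`C(m', m'/2)` is nonzero mod `r`. -/
theorem stmt17 (r d m : ℕ) (hr : r.Prime) (h3 : 3 ≤ r) (hodd : Odd r)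
    (hd : 1 ≤ d) (hm : 1 ≤ m)
    (N N₀ m' : ℕ)
    (hN : N = (r - 1) * d + m * ((r ^ 2 - 1) / 2))
    (hN0 : N₀ = N / 2)
    (hm' : m' = m * (r - 1) / 2) (heven : Even m') :
    let Q := Ideal.span
      {(X 0 ^ (N₀ + 1) : MvPolynomial (Fin 2) (ZMod r)), X 1 ^ (N₀ + 1)}
    (Ideal.Quotient.mk Q
        (X 0 ^ (d * (r - 1) / 2) * X 1 ^ (d * (r - 1) / 2) *
          (X 0 * X 1 ^ r - X 1 * X 0 ^ r) ^ m') ≠ 0)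
      ↔ (Nat.choose m' (m' / 2) : ZMod r) ≠ 0 :=
  stmt17_general r d m h3 hodd N N₀ m' hN hN0 hm' heven
end
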